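/- arXiv:1812.04930 — 4 statements merged into one kernel-verified Lean document; each statement's English description precedes it below -/
import Mathlib

section
/- Let ι be a finite type and let V be a ℚ-linear subspace of (ι → ℚ). Then V is spanned by its minimally supported vectors; that is, V equals the ℚ-span of the set of vectors v ∈ V such that v ≠ 0 and there is no nonzero w ∈ V whose support is strictly contained in the support of v. (For V = Z_i(X) this says that the set of i-minimal cycles generates the cycle space.) -/
/-!
Induct on the support. If `v ∈ V` is nonzero but not minimal, some nonzero `w ∈ V` has
`supp w ⊂ supp v`; choosing `i` with `w i ≠ 0`, the vector `v - (v i / w i) • w` also lies in `V`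
and has support strictly inside `supp v` (it vanishes at `i`). Both `w` and this vector are in
the span by induction, hence so is `v`.
-/

open Function

section

variable {ι K : Type*} [DivisionRing K]

theorem support_sub_div_smul_ssubset {v w : ι → K} (hwv : support w ⊆ support v) {i : ι}
    (hi : w i ≠ 0) : support (v - (v i / w i) • w) ⊂ support v := by
  have hsub : support (v - (v i / w i) • w) ⊆ support v :=
    (support_sub _ _).trans <| Set.union_subset subset_rfl <|
      (support_const_smul_subset _ _).trans hwv
  exact ⟨hsub, fun h => h (hwv hi) (by simp [hi])⟩

namespace Submodule

def minimalSupportVectors (V : Submodule K (ι → K)) : Set (ι → K) :=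
  {v | v ∈ V ∧ v ≠ 0 ∧ ¬ ∃ w ∈ V, w ≠ 0 ∧ support w ⊂ support v}

theorem span_minimalSupportVectors [Finite ι] (V : Submodule K (ι → K)) :
    span K V.minimalSupportVectors = V := by
  refine le_antisymm (span_le.mpr fun v hv => hv.1) fun v hv => ?_
  induction hs : support v using WellFoundedLT.induction generalizing v with
  | ind s ih =>
    by_cases h0 : v = 0
    · simp [h0]
    by_cases hmin : ∃ w ∈ V, w ≠ 0 ∧ support w ⊂ support v
    · obtain ⟨w, hwV, hw0, hwv⟩ := hmin
      obtain ⟨i, hi⟩ := Function.ne_iff.mp hw0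
      have hw := ih _ (hs ▸ hwv) w hwV rfl
      have hvw := ih _ (hs ▸ support_sub_div_smul_ssubset hwv.subset hi) _
        (V.sub_mem hv (V.smul_mem _ hwV)) rfl
      simpa using add_mem hvw (smul_mem _ (v i / w i) hw)
    · exact subset_span ⟨hv, h0, hmin⟩

end Submodule

end

/-- A subspace `V` of `ι → ℚ` (`ι` finite) is spanned by its minimally supported
vectors: the nonzero `v ∈ V` such that no nonzero `w ∈ V` has support strictly
contained in the support of `v`. -/
theorem span_minimally_supported (ι : Type*) [Fintype ι] (V : Submodule ℚ (ι → ℚ)) :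
    V = Submodule.span ℚ {v : ι → ℚ | v ∈ V ∧ v ≠ 0 ∧
      ¬ ∃ w ∈ V, w ≠ 0 ∧ Function.support w ⊂ Function.support v} :=
  V.span_minimalSupportVectors.symm
end

section
/- Let ι be a finite type and let W ⊆ V be ℚ-linear subspaces of (ι → ℚ) with finrank V ≤ finrank W + 1. Then every minimally supported vector of W is either a minimally supported vector of V, or is the sum of two minimally supported vectors of V. (Applied with W = B_i(X;ℚ) the boundary space and V = Z_i(X;ℚ) the cycle space of a complex with rk H̃_i(X) = 1, this says that a minimal boundary is either a minimal cycle or the sum of two minimal cycles.) -/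
/-- `v` is a minimally supported vector of the subspace `V ≤ (ι → ℚ)`:
`v` is a nonzero element of `V` and no nonzero element of `V` has support
strictly contained in the support of `v`. -/
def MinSupp {ι : Type*} (V : Submodule ℚ (ι → ℚ)) (v : ι → ℚ) : Prop :=
  v ∈ V ∧ v ≠ 0 ∧ ¬ ∃ w ∈ V, w ≠ 0 ∧ Function.support w ⊂ Function.support v

/-!
Put `S = supp v` and `ℚ^S = supported ℚ S`. Minimality of `v` in `W` means every vector of `W`
supported in `S` is a multiple of `v`, so the dimension count gives
`dim (V ∩ ℚ^S) ≤ dim V - dim W + 1 ≤ 2`. If `v` is not minimal in `V`, choose a minimal vector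
`x` of `V` with `supp x ⊊ S` and scale it to agree with `v` at some `i ∈ supp x`. Then
`y = v - c • x` is nonzero and vanishes at `i`; the vectors of `V ∩ ℚ^S` vanishing at `i` form a
proper subspace, hence the line through `y`, so every vector of `V` supported in `supp y` is a
multiple of `y`: `y` is minimal as well.
-/

open Module Function

def supported (K : Type*) [Field K] {ι : Type*} (S : Set ι) : Submodule K (ι → K) where
  carrier := {u | support u ⊆ S}
  add_mem' hu hv := (support_add _ _).trans (Set.union_subset hu hv)
  zero_mem' := by simp
  smul_mem' c _ hu := (support_const_smul_subset c _).trans hu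

lemma MinSupp.smul {ι : Type*} {V : Submodule ℚ (ι → ℚ)} {v : ι → ℚ} (hv : MinSupp V v)
    {c : ℚ} (hc : c ≠ 0) : MinSupp V (c • v) := by
  obtain ⟨hvV, hv0, hmin⟩ := hv
  exact ⟨V.smul_mem c hvV, smul_ne_zero hc hv0, by rwa [support_const_smul_of_ne_zero c v hc]⟩

lemma exists_minSupp_support_subset {ι : Type*} [Finite ι] {V : Submodule ℚ (ι → ℚ)}
    {w : ι → ℚ} (hwV : w ∈ V) (hw0 : w ≠ 0) :
    ∃ x, MinSupp V x ∧ support x ⊆ support w := by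
  obtain ⟨_, hsw, ⟨x, hxV, hx0, rfl⟩, hmin⟩ := exists_minimal_le_of_wellFoundedLT
    (fun s : Set ι ↦ ∃ u ∈ V, u ≠ 0 ∧ support u = s) _ ⟨w, hwV, hw0, rfl⟩
  refine ⟨x, ⟨hxV, hx0, ?_⟩, hsw⟩
  rintro ⟨u, huV, hu0, hux⟩
  exact hux.not_subset (hmin ⟨u, huV, hu0, rfl⟩ hux.subset)

lemma minSupp_iff_forall_mem_span {ι : Type*} {V : Submodule ℚ (ι → ℚ)} {v : ι → ℚ} :
    MinSupp V v ↔ v ∈ V ∧ v ≠ 0 ∧ ∀ u ∈ V, support u ⊆ support v → u ∈ ℚ ∙ v := by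
  refine and_congr_right fun hvV ↦ and_congr_right fun hv0 ↦ ⟨fun hmin u huV hu ↦ ?_, ?_⟩
  · obtain ⟨k, hk⟩ := support_nonempty_iff.mpr hv0
    -- `u - c • v` vanishes at `k`, so minimality of `v` forces it to be zero
    have hz : u - (u k / v k) • v = 0 := by
      by_contra hz
      refine hmin ⟨_, V.sub_mem huV (V.smul_mem _ hvV), hz, ?_⟩
      refine LE.le.ssubset_of_not_superset
        ((support_sub _ _).trans (Set.union_subset hu (support_const_smul_subset _ _)))
        fun h ↦ h hk ?_
      simp [div_mul_cancel₀ _ (hk : v k ≠ 0)]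
    exact Submodule.mem_span_singleton.mpr ⟨_, (sub_eq_zero.mp hz).symm⟩
  · rintro hspan ⟨u, huV, hu0, hus⟩
    obtain ⟨c, rfl⟩ := Submodule.mem_span_singleton.mp (hspan u huV hus.subset)
    exact hus.ne (support_const_smul_of_ne_zero c v (left_ne_zero_of_smul hu0))

lemma Submodule.finrank_inf_add_finrank_le {K M : Type*} [Field K] [AddCommGroup M]
    [Module K M] [FiniteDimensional K M] {W V : Submodule K M} (hWV : W ≤ V)
    (P : Submodule K M) :
    finrank K ↥(V ⊓ P) + finrank K W ≤ finrank K V + finrank K ↥(W ⊓ P) := by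
  have h := Submodule.finrank_sup_add_finrank_inf_eq (V ⊓ P) W
  have hsup := Submodule.finrank_mono (sup_le (inf_le_left : V ⊓ P ≤ V) hWV)
  rw [show V ⊓ P ⊓ W = W ⊓ P by rw [inf_right_comm, inf_eq_right.mpr hWV]] at h
  omega

lemma mem_span_singleton_of_finrank_le_two {K M : Type*} [Field K] [AddCommGroup M]
    [Module K M] {U : Submodule K M} [FiniteDimensional K U] (hU : finrank K U ≤ 2)
    (f : M →ₗ[K] K) {x y u : M} (hx : x ∈ U) (hfx : f x ≠ 0) (hy : y ∈ U) (hy0 : y ≠ 0)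
    (hfy : f y = 0) (hu : u ∈ U) (hfu : f u = 0) : u ∈ K ∙ y := by
  have hlt : U ⊓ LinearMap.ker f < U := inf_lt_left.mpr fun h ↦ hfx (h hx)
  have hle : K ∙ y ≤ U ⊓ LinearMap.ker f :=
    (Submodule.span_singleton_le_iff_mem _ _).mpr ⟨hy, hfy⟩
  have hrank := Submodule.finrank_lt_finrank_of_lt hlt
  rw [Submodule.eq_of_le_of_finrank_le hle (by rw [finrank_span_singleton hy0]; omega)]
  exact ⟨hu, hfu⟩

lemma MinSupp.finrank_inf_supported_le_one {ι : Type*} {W : Submodule ℚ (ι → ℚ)} {v : ι → ℚ}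
    (hv : MinSupp W v) : finrank ℚ ↥(W ⊓ supported ℚ (support v)) ≤ 1 := by
  obtain ⟨-, hv0, hspan⟩ := minSupp_iff_forall_mem_span.mp hv
  have hle : W ⊓ supported ℚ (support v) ≤ ℚ ∙ v := fun u hu ↦ hspan u hu.1 hu.2
  simpa [finrank_span_singleton hv0] using Submodule.finrank_mono hle

lemma minSupp_sub_div_smul {ι : Type*} [Finite ι] {V : Submodule ℚ (ι → ℚ)} {v x : ι → ℚ}
    (hU : finrank ℚ ↥(V ⊓ supported ℚ (support v)) ≤ 2) (hvV : v ∈ V) (hx : MinSupp V x)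
    (hxv : support x ⊂ support v) {i : ι} (hi : x i ≠ 0) :
    MinSupp V (v - (v i / x i) • x) := by
  set y := v - (v i / x i) • x
  have hyV : y ∈ V := V.sub_mem hvV (V.smul_mem _ hx.1)
  have hyi : y i = 0 := by simp [y, div_mul_cancel₀ _ hi]
  have hyv : support y ⊆ support v :=
    (support_sub _ _).trans (Set.union_subset subset_rfl
      ((support_const_smul_subset _ _).trans hxv.subset))
  obtain ⟨j, hjv, hjx⟩ := Set.exists_of_ssubset hxv
  have hy0 : y ≠ 0 := fun h ↦ hjv (by simpa [y, notMem_support.mp hjx] using congrFun h j)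
  refine minSupp_iff_forall_mem_span.mpr ⟨hyV, hy0, fun u huV hu ↦ ?_⟩
  exact mem_span_singleton_of_finrank_le_two hU (LinearMap.proj i) ⟨hx.1, hxv.subset⟩ hi
    ⟨hyV, hyv⟩ hy0 hyi ⟨huV, hu.trans hyv⟩ (notMem_support.mp fun h ↦ hu h hyi)

/-- If `W ⊆ V` are subspaces of `ι → ℚ` (`ι` finite) with `finrank V ≤ finrank W + 1`,
then every minimally supported vector of `W` is either a minimally supported vector
of `V` or the sum of two minimally supported vectors of `V`. -/
theorem minSupp_sub_eq_or_sum_two (ι : Type*) [Fintype ι]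
    (W V : Submodule ℚ (ι → ℚ)) (hWV : W ≤ V)
    (hrank : Module.finrank ℚ V ≤ Module.finrank ℚ W + 1)
    (v : ι → ℚ) (hv : MinSupp W v) :
    MinSupp V v ∨ ∃ x y : ι → ℚ, MinSupp V x ∧ MinSupp V y ∧ v = x + y := by
  by_cases hvV : MinSupp V v
  · exact Or.inl hvV
  obtain ⟨w, hwV, hw0, hwv⟩ : ∃ w ∈ V, w ≠ 0 ∧ support w ⊂ support v :=
    of_not_not fun h ↦ hvV ⟨hWV hv.1, hv.2.1, h⟩
  obtain ⟨x, hx, hxw⟩ := exists_minSupp_support_subset hwV hw0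
  obtain ⟨i, hi⟩ := support_nonempty_iff.mpr hx.2.1
  have hU : finrank ℚ ↥(V ⊓ supported ℚ (support v)) ≤ 2 := by
    have := Submodule.finrank_inf_add_finrank_le hWV (supported ℚ (support v))
    have := hv.finrank_inf_supported_le_one
    omega
  have hc : v i / x i ≠ 0 := div_ne_zero (hxw.trans hwv.subset hi) hi
  exact Or.inr ⟨_, _, hx.smul hc,
    minSupp_sub_div_smul hU (hWV hv.1) hx (hxw.trans_ssubset hwv) hi, (add_sub_cancel _ _).symm⟩
end

section
/- Inner product formula: under the above setup, for every integer vector z ∈ Z₂ (i.e. every z ∈ ℤ^c with ∂ᵀ-action ∂ · z = 0), one has z ∘ λ = w(z) · k, where ∘ is the standard dot product on ℤ^c. -/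
open Matrix

/-- determinant of the square submatrix of `M` formed by the columns indexed by `I`
(in increasing order); junk value `0` if `I` does not have exactly `n` elements. -/
noncomputable def colsDet {n c : ℕ} (M : Matrix (Fin n) (Fin c) ℤ) (I : Finset (Fin c)) : ℤ :=
  if h : I.card = n then
    (M.submatrix id fun t => ((I.orderIsoOfFin h t : Fin c))).det
  else 0

/-- the cycle `C_I` attached to an `(n+1)`-element subset `I = {i₀ < … < i_n}` of column
indices of `D`: its `i_j`-th entry is `(−1)^j · det(D restricted to the columns I ∖ {i_j})`
and its entries outside `I` vanish (junk value `0` if `I.card ≠ n+1`). -/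
noncomputable def cyc {n c : ℕ} (D : Matrix (Fin n) (Fin c) ℤ) (I : Finset (Fin c)) :
    Fin c → ℤ := fun e =>
  if h : I.card = n + 1 ∧ e ∈ I then
    (-1) ^ ((((I.orderIsoOfFin h.1).symm ⟨e, h.2⟩ : Fin (n + 1)) : ℕ)) *
      colsDet D (I.erase e)
  else 0

/-- determinant of the square matrix whose first column is the coordinate vector of `z`
in the basis `Z'` of `ker B` and whose remaining columns are the coordinate vectors of
the kernel elements `cols`.  With `cols` the columns of `∂₊` indexed by `J`, this is the
winding number `w(z)`; in the dual setting it is the cutting number. -/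
noncomputable def detCoord {b c r : ℕ} {B : Matrix (Fin b) (Fin c) ℤ}
    (Z' : Module.Basis (Fin (r + 1)) ℤ (LinearMap.ker B.mulVecLin))
    (cols : Fin r → LinearMap.ker B.mulVecLin)
    (z : LinearMap.ker B.mulVecLin) : ℤ :=
  (Matrix.of fun i j =>
    Fin.cons (α := fun _ => ℤ) (Z'.repr z i) (fun t => Z'.repr (cols t) i) j).det

/-! Laplace expansion along an added first row shows that `u ⬝ᵥ C_I` is the maximal minor on
the columns `I` of `D` with the row `u` on top; in particular `D C_I = 0`. Cauchy–Binet then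
gives `∑_I (u ⬝ᵥ C_I) (y ⬝ᵥ C_I) = (u ⬝ᵥ y) det (D Dᵀ)` whenever `D y = 0`. Hence for `z` in
`ker D` the vector `∑_I (z ⬝ᵥ C_I) C_I - k z` lies in `ker D` and is orthogonal to `ker D`, so it
vanishes. As `Z` is independent, `ker ∂ = ker D`, and applying the linear functional `w` to
`∑_I (z ⬝ᵥ C_I) C_I = k z` gives the formula. -/

open Finset

theorem Finset.sum_injective_of_image_eq_eq_sum_perm {α β : Type*} [LinearOrder α] [Fintype α]
    [AddCommMonoid β] {m : ℕ} {I : Finset α} (hI : I.card = m) (F : (Fin m → α) → β) :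
    ∑ f : Fin m → α with Function.Injective f ∧ image f univ = I, F f
      = ∑ σ : Equiv.Perm (Fin m), F (I.orderEmbOfFin hI ∘ σ) := by
  set e := I.orderEmbOfFin hI
  have hinj : Function.Injective fun σ : Equiv.Perm (Fin m) => e ∘ σ := fun σ τ h =>
    Equiv.ext fun x => e.injective (congrFun h x)
  rw [← sum_image fun σ _ τ _ h => hinj h]
  congr 1
  ext f
  simp only [mem_filter, mem_univ, true_and, mem_image]
  constructor
  · rintro ⟨hf, rfl⟩
    have hsorted : f ∘ Tuple.sort f = e :=
      orderEmbOfFin_unique hI (fun x => mem_image_of_mem f (mem_univ _))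
        ((Tuple.monotone_sort f).strictMono_of_injective (hf.comp (Tuple.sort f).injective))
    refine ⟨(Tuple.sort f)⁻¹, funext fun x => ?_⟩
    simp [← hsorted]
  · rintro ⟨σ, rfl⟩
    refine ⟨e.injective.comp σ.injective, ?_⟩
    rw [← image_image, image_univ_equiv, image_orderEmbOfFin_univ]

theorem Matrix.det_mul_transpose_eq_sum_prod_mul_det {R ι : Type*} [CommRing R] [Fintype ι]
    [DecidableEq ι] {m : ℕ} (M N : Matrix (Fin m) ι R) :
    (M * Nᵀ).det = ∑ f : Fin m → ι, (∏ i, M i (f i)) * (Nᵀ.submatrix f id).det := by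
  have hrows : M * Nᵀ = of fun i => ∑ j, M i j • Nᵀ j := by
    ext i k
    simp [mul_apply, Finset.sum_apply]
  rw [hrows]
  change detRowAlternating.toMultilinearMap (fun i => ∑ j, M i j • Nᵀ j) = _
  rw [MultilinearMap.map_sum]
  refine sum_congr rfl fun f _ => ?_
  rw [MultilinearMap.map_smul_univ, smul_eq_mul]
  rfl

theorem colsDet_mul_colsDet {m s : ℕ} (M N : Matrix (Fin m) (Fin s) ℤ) {I : Finset (Fin s)}
    (hI : I.card = m) :
    colsDet M I * colsDet N I = ∑ σ : Equiv.Perm (Fin m),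
      (∏ i, M i (I.orderEmbOfFin hI (σ i))) * (Nᵀ.submatrix (I.orderEmbOfFin hI ∘ σ) id).det := by
  have hN : ∀ σ : Equiv.Perm (Fin m), (Nᵀ.submatrix (I.orderEmbOfFin hI ∘ σ) id).det
      = Equiv.Perm.sign σ * colsDet N I := by
    intro σ
    have hperm : Nᵀ.submatrix (I.orderEmbOfFin hI ∘ σ) id
        = (Nᵀ.submatrix (I.orderEmbOfFin hI) id).submatrix σ id := rfl
    rw [hperm, det_permute, colsDet, dif_pos hI, ← det_transpose (N.submatrix _ _)]
    rfl
  rw [colsDet, dif_pos hI, ← det_transpose, det_apply', sum_mul]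
  refine sum_congr rfl fun σ _ => ?_
  rw [hN, Int.cast_id]
  simp only [transpose_apply, submatrix_apply, id, coe_orderIsoOfFin_apply]
  ring

theorem det_mul_transpose_eq_sum_colsDet_mul_colsDet {m s : ℕ} (M N : Matrix (Fin m) (Fin s) ℤ) :
    (M * Nᵀ).det = ∑ I ∈ powersetCard m (univ : Finset (Fin s)), colsDet M I * colsDet N I := by
  set F : (Fin m → Fin s) → ℤ := fun f => (∏ i, M i (f i)) * (Nᵀ.submatrix f id).det
  have hinjective : ∀ f ∈ (univ : Finset (Fin m → Fin s)), F f ≠ 0 → Function.Injective f := by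
    intro f _ hF
    by_contra hf
    obtain ⟨i, j, hij, hne⟩ := Function.not_injective_iff.mp hf
    exact hF (mul_eq_zero_of_right _ (det_zero_of_row_eq hne (by ext k; simp [hij])))
  have hmaps : ∀ f ∈ (univ : Finset (Fin m → Fin s)).filter Function.Injective,
      image f univ ∈ powersetCard m (univ : Finset (Fin s)) := by
    intro f hf
    rw [mem_filter] at hf
    simp [mem_powersetCard, card_image_of_injective _ hf.2]
  rw [det_mul_transpose_eq_sum_prod_mul_det, ← sum_filter_of_ne hinjective,
    ← sum_fiberwise_of_maps_to hmaps]
  refine sum_congr rfl fun I hI => ?_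
  have hcard := (mem_powersetCard.mp hI).2
  rw [filter_filter, sum_injective_of_image_eq_eq_sum_perm hcard, colsDet_mul_colsDet M N hcard]
  rfl

section Cycles

variable {n c : ℕ} (D : Matrix (Fin n) (Fin c) ℤ)

theorem cyc_orderEmbOfFin {I : Finset (Fin c)} (hI : I.card = n + 1) (j : Fin (n + 1)) :
    cyc D I (I.orderEmbOfFin hI j)
      = (-1) ^ (j : ℕ) * colsDet D (I.erase (I.orderEmbOfFin hI j)) := by
  have hsymm : (I.orderIsoOfFin hI).symm ⟨I.orderEmbOfFin hI j, orderEmbOfFin_mem I hI j⟩ = j :=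
    (I.orderIsoOfFin hI).symm_apply_apply j
  rw [cyc, dif_pos ⟨hI, orderEmbOfFin_mem I hI j⟩, hsymm]

theorem dotProduct_cyc (u : Fin c → ℤ) {I : Finset (Fin c)} (hI : I.card = n + 1) :
    u ⬝ᵥ cyc D I = ∑ j : Fin (n + 1),
      (-1) ^ (j : ℕ) * u (I.orderEmbOfFin hI j) * colsDet D (I.erase (I.orderEmbOfFin hI j)) := by
  have hsupp : ∀ x ∈ (univ : Finset (Fin c)), x ∉ I → u x * cyc D I x = 0 := by
    intro x _ hx
    rw [cyc, dif_neg fun h => hx h.2, mul_zero]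
  rw [dotProduct, ← sum_subset (subset_univ I) hsupp, ← sum_coe_sort I,
    ← (I.orderIsoOfFin hI).toEquiv.sum_comp]
  refine sum_congr rfl fun j _ => ?_
  change u (I.orderEmbOfFin hI j) * cyc D I (I.orderEmbOfFin hI j) = _
  rw [cyc_orderEmbOfFin]
  ring

theorem colsDet_erase_orderEmbOfFin {I : Finset (Fin c)} (hI : I.card = n + 1)
    (j : Fin (n + 1)) :
    colsDet D (I.erase (I.orderEmbOfFin hI j))
      = (D.submatrix id (I.orderEmbOfFin hI ∘ j.succAbove)).det := by
  have hcard : (I.erase (I.orderEmbOfFin hI j)).card = n := by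
    rw [card_erase_of_mem (orderEmbOfFin_mem I hI j), hI, Nat.add_sub_cancel]
  have hmem : ∀ t, I.orderEmbOfFin hI (j.succAbove t) ∈ I.erase (I.orderEmbOfFin hI j) :=
    fun t => mem_erase.mpr
      ⟨fun h => j.succAbove_ne t ((I.orderEmbOfFin hI).injective h), orderEmbOfFin_mem I hI _⟩
  have hsorted : I.orderEmbOfFin hI ∘ j.succAbove
      = (I.erase (I.orderEmbOfFin hI j)).orderEmbOfFin hcard :=
    orderEmbOfFin_unique hcard hmem
      ((I.orderEmbOfFin hI).strictMono.comp (Fin.strictMono_succAbove j))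
  rw [colsDet, dif_pos hcard, hsorted]
  rfl

theorem colsDet_vecCons (u : Fin c → ℤ) {I : Finset (Fin c)} (hI : I.card = n + 1) :
    colsDet (of (vecCons u D)) I = ∑ j : Fin (n + 1),
      (-1) ^ (j : ℕ) * u (I.orderEmbOfFin hI j) * colsDet D (I.erase (I.orderEmbOfFin hI j)) := by
  rw [colsDet, dif_pos hI, det_succ_row_zero]
  refine sum_congr rfl fun j _ => ?_
  rw [colsDet_erase_orderEmbOfFin D hI j]
  rfl

theorem dotProduct_cyc_eq_colsDet (u : Fin c → ℤ) {I : Finset (Fin c)} (hI : I.card = n + 1) :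
    u ⬝ᵥ cyc D I = colsDet (of (vecCons u D)) I := by
  rw [dotProduct_cyc D u hI, colsDet_vecCons D u hI]

theorem mulVec_cyc (I : Finset (Fin c)) : D *ᵥ cyc D I = 0 := by
  by_cases hI : I.card = n + 1
  · ext l
    rw [mulVec, dotProduct_cyc_eq_colsDet D _ hI, colsDet, dif_pos hI, Pi.zero_apply]
    exact det_zero_of_row_eq (Fin.succ_ne_zero l).symm rfl
  · have hzero : cyc D I = 0 := funext fun e => dif_neg fun h => hI h.1
    rw [hzero, mulVec_zero]

end Cycles

theorem Matrix.det_vecCons_mul_vecCons_transpose {R : Type*} [CommRing R] {n c : ℕ}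
    (D : Matrix (Fin n) (Fin c) R) (u y : Fin c → R) (hy : D *ᵥ y = 0) :
    (of (vecCons u D) * (of (vecCons y D))ᵀ).det = (u ⬝ᵥ y) * (D * Dᵀ).det := by
  set P := of (vecCons u D) * (of (vecCons y D))ᵀ
  have hcol : ∀ i : Fin n, P i.succ 0 = 0 := fun i => congrFun hy i
  have hcorner : P.submatrix Fin.succ Fin.succ = D * Dᵀ := rfl
  rw [det_succ_column_zero, Fin.sum_univ_succ]
  simp only [hcol, mul_zero, zero_mul, sum_const_zero, add_zero, Fin.succAbove_zero, hcorner,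
    Fin.val_zero, pow_zero, one_mul]
  rfl

section Projection

variable {n c : ℕ} (D : Matrix (Fin n) (Fin c) ℤ)

theorem sum_dotProduct_cyc_mul_dotProduct_cyc (u y : Fin c → ℤ) (hy : D *ᵥ y = 0) :
    ∑ I ∈ powersetCard (n + 1) (univ : Finset (Fin c)), (u ⬝ᵥ cyc D I) * (y ⬝ᵥ cyc D I)
      = (u ⬝ᵥ y) * (D * Dᵀ).det := by
  rw [← det_vecCons_mul_vecCons_transpose D u y hy,
    det_mul_transpose_eq_sum_colsDet_mul_colsDet]
  refine sum_congr rfl fun I hI => ?_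
  have hcard := (mem_powersetCard.mp hI).2
  rw [dotProduct_cyc_eq_colsDet D u hcard, dotProduct_cyc_eq_colsDet D y hcard]

theorem sum_dotProduct_cyc_smul_cyc (z : Fin c → ℤ) (hz : D *ᵥ z = 0) :
    ∑ I ∈ powersetCard (n + 1) (univ : Finset (Fin c)), (z ⬝ᵥ cyc D I) • cyc D I
      = (D * Dᵀ).det • z := by
  set v := ∑ I ∈ powersetCard (n + 1) (univ : Finset (Fin c)), (z ⬝ᵥ cyc D I) • cyc D I
    - (D * Dᵀ).det • z
  have hv : D *ᵥ v = 0 := by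
    simp only [v, mulVec_sub, mulVec_sum, mulVec_smul, mulVec_cyc, hz, smul_zero,
      sum_const_zero, sub_zero]
  have horth : ∀ y, D *ᵥ y = 0 → y ⬝ᵥ v = 0 := by
    intro y hy
    simp only [v, dotProduct_sub, dotProduct_sum, dotProduct_smul, smul_eq_mul]
    rw [sum_dotProduct_cyc_mul_dotProduct_cyc D z y hy, dotProduct_comm y z]
    ring
  exact sub_eq_zero.mp (dotProduct_self_eq_zero.mp (horth v hv))

end Projection

theorem Matrix.mulVec_eq_zero_of_linearIndependent {R ι κ μ : Type*} [CommRing R] [Fintype ι]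
    [Fintype μ] {B : Matrix κ μ R} {D : Matrix ι μ R} {v : ι → κ → R}
    (hv : LinearIndependent R v) (hD : ∀ j i, B i j = ∑ l, D l j * v l i) {x : μ → R}
    (hx : B *ᵥ x = 0) : D *ᵥ x = 0 := by
  have hB : B *ᵥ x = ∑ l, (D *ᵥ x) l • v l := by
    ext i
    simp only [mulVec, dotProduct, hD, Finset.sum_apply, Pi.smul_apply, smul_eq_mul, sum_mul]
    rw [sum_comm]
    exact sum_congr rfl fun l _ => sum_congr rfl fun j _ => by ring
  exact funext (Fintype.linearIndependent_iff.mp hv _ (hB ▸ hx))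

-- By Cramer's rule, `detCoord` is a determinant whose column `0` is the coordinate vector.
noncomputable def detCoordLinearMap {b c r : ℕ} {B : Matrix (Fin b) (Fin c) ℤ}
    (Z' : Module.Basis (Fin (r + 1)) ℤ (LinearMap.ker B.mulVecLin))
    (cols : Fin r → LinearMap.ker B.mulVecLin) : LinearMap.ker B.mulVecLin →ₗ[ℤ] ℤ :=
  LinearMap.proj 0 ∘ₗ
    cramer (of fun i j => Fin.cons (α := fun _ => ℤ) 0 (fun t => Z'.repr (cols t) i) j)
    ∘ₗ Finsupp.lcoeFun ∘ₗ Z'.repr.toLinearMap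

theorem detCoordLinearMap_apply {b c r : ℕ} {B : Matrix (Fin b) (Fin c) ℤ}
    (Z' : Module.Basis (Fin (r + 1)) ℤ (LinearMap.ker B.mulVecLin))
    (cols : Fin r → LinearMap.ker B.mulVecLin) (z : LinearMap.ker B.mulVecLin) :
    detCoordLinearMap Z' cols z = detCoord Z' cols z := by
  simp only [detCoordLinearMap, LinearMap.coe_comp, Function.comp_apply, LinearMap.coe_proj,
    Function.eval, cramer_apply, detCoord]
  congr 1
  ext i j
  cases j using Fin.cases <;> simp

theorem inner_product_formula_general
    -- chain complex of free abelian groups around degree i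
    (a b c : ℕ)
    (Bm : Matrix (Fin a) (Fin b) ℤ) (B : Matrix (Fin b) (Fin c) ℤ)
    -- `Z` is a ℤ-basis of `Z₁ = ker ∂₋`, of rank n, and `D = [∂]_Z` is the matrix of
    -- coordinates of the columns of `∂` in the basis `Z`
    (n : ℕ) (Z : Module.Basis (Fin n) ℤ (LinearMap.ker Bm.mulVecLin))
    (D : Matrix (Fin n) (Fin c) ℤ)
    (hD : ∀ j i, B i j = ∑ l, D l j * (Z l : Fin b → ℤ) i)
    -- `Z'` is a ℤ-basis of `Z₂ = ker ∂`, of rank r + 1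
    (r : ℕ) (Z' : Module.Basis (Fin (r + 1)) ℤ (LinearMap.ker B.mulVecLin))
    -- `J` picks r columns of `∂₊` whose ℚ-span is the full column space of `∂₊`;
    -- `Jcol` are these columns as elements of `Z₂`
    (Jcol : Fin r → LinearMap.ker B.mulVecLin)
    -- the cycles `C_I` as elements of `Z₂`
    (CI : Finset (Fin c) → LinearMap.ker B.mulVecLin)
    (hCI : ∀ I, (CI I : Fin c → ℤ) = cyc D I)
    -- an integer cycle `z ∈ Z₂`
    (z : Fin c → ℤ) (hz : z ∈ LinearMap.ker B.mulVecLin) :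
    z ⬝ᵥ (∑ I ∈ Finset.powersetCard (n + 1) (Finset.univ : Finset (Fin c)),
        detCoord Z' Jcol (CI I) • cyc D I)
      = detCoord Z' Jcol ⟨z, hz⟩ * (D * Dᵀ).det := by
  have hDz : D *ᵥ z = 0 := Matrix.mulVec_eq_zero_of_linearIndependent
    (Z.linearIndependent.map' _ (Submodule.ker_subtype _)) hD (LinearMap.mem_ker.mp hz)
  have hcycles : ∑ I ∈ powersetCard (n + 1) univ, (z ⬝ᵥ cyc D I) • CI I
      = (D * Dᵀ).det • (⟨z, hz⟩ : LinearMap.ker B.mulVecLin) := by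
    ext1
    push_cast [hCI]
    exact sum_dotProduct_cyc_smul_cyc D z hDz
  calc z ⬝ᵥ (∑ I ∈ powersetCard (n + 1) univ, detCoord Z' Jcol (CI I) • cyc D I)
      = detCoordLinearMap Z' Jcol (∑ I ∈ powersetCard (n + 1) univ, (z ⬝ᵥ cyc D I) • CI I) := by
        simp only [dotProduct_sum, dotProduct_smul, map_sum, map_smul, detCoordLinearMap_apply,
          smul_eq_mul, mul_comm]
    _ = detCoord Z' Jcol ⟨z, hz⟩ * (D * Dᵀ).det := by
        rw [hcycles, map_smul, detCoordLinearMap_apply, smul_eq_mul, mul_comm]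

/-- Inner product formula: `z ∘ λ = w(z) · k` for every integer cycle `z ∈ Z₂`,
where `λ = Σ_I w(C_I) • C_I` is the standard harmonic cycle and
`k = det([∂]_Z [∂]_Zᵀ)` is the tree number. -/
theorem inner_product_formula
    -- chain complex of free abelian groups around degree i
    (a b c d : ℕ) (ha : 0 < a) (hb : 0 < b) (hc : 0 < c) (hd : 0 < d)
    (Bm : Matrix (Fin a) (Fin b) ℤ) (B : Matrix (Fin b) (Fin c) ℤ)
    (Bp : Matrix (Fin c) (Fin d) ℤ)
    (h1 : Bm * B = 0) (h2 : B * Bp = 0)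
    -- `Z` is a ℤ-basis of `Z₁ = ker ∂₋`, of rank n, and `D = [∂]_Z` is the matrix of
    -- coordinates of the columns of `∂` in the basis `Z`
    (n : ℕ) (Z : Module.Basis (Fin n) ℤ (LinearMap.ker Bm.mulVecLin))
    (D : Matrix (Fin n) (Fin c) ℤ)
    (hD : ∀ j i, B i j = ∑ l, D l j * (Z l : Fin b → ℤ) i)
    -- `rk H̃_{i−1}(X) = 0` and `rk H̃_i(X) = 1`
    (hrkB : (B.map (Int.cast : ℤ → ℚ)).rank = n)
    (hker : Module.finrank ℚ (LinearMap.ker (B.map (Int.cast : ℤ → ℚ)).mulVecLin)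
      = (Bp.map (Int.cast : ℤ → ℚ)).rank + 1)
    -- `Z'` is a ℤ-basis of `Z₂ = ker ∂`, of rank r + 1
    (r : ℕ) (Z' : Module.Basis (Fin (r + 1)) ℤ (LinearMap.ker B.mulVecLin))
    -- `J` picks r columns of `∂₊` whose ℚ-span is the full column space of `∂₊`;
    -- `Jcol` are these columns as elements of `Z₂`
    (J : Fin r → Fin d) (hJinj : Function.Injective J)
    (Jcol : Fin r → LinearMap.ker B.mulVecLin)
    (hJcol : ∀ t, (Jcol t : Fin c → ℤ) = fun i => Bp i (J t))
    (hJspan : Submodule.span ℚ (Set.range fun t => fun i => (Bp i (J t) : ℚ))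
      = Submodule.span ℚ (Set.range fun j => fun i => (Bp i j : ℚ)))
    -- the cycles `C_I` as elements of `Z₂`
    (CI : Finset (Fin c) → LinearMap.ker B.mulVecLin)
    (hCI : ∀ I, (CI I : Fin c → ℤ) = cyc D I)
    -- an integer cycle `z ∈ Z₂`
    (z : Fin c → ℤ) (hz : z ∈ LinearMap.ker B.mulVecLin) :
    z ⬝ᵥ (∑ I ∈ Finset.powersetCard (n + 1) (Finset.univ : Finset (Fin c)),
        detCoord Z' Jcol (CI I) • cyc D I)
      = detCoord Z' Jcol ⟨z, hz⟩ * (D * Dᵀ).det :=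
  inner_product_formula_general a b c Bm B n Z D hD r Z' Jcol CI hCI z hz
end

section
/- Under the above setup, the standard harmonic cycle λ is a nonzero harmonic cycle: λ ≠ 0, ∂ · λ = 0, and ∂₊ᵀ · λ = 0 (i.e. λ lies in ker ∂ ∩ ker ∂₊ᵀ, the harmonic space 𝓗_i(X)). -/
open Matrix

/-!
Extend the winding number `w` to a rational linear form `v` on `ℚ^c` with `w z = v ⬝ᵥ z` on `Z₂`.
By Laplace expansion, `v ⬝ᵥ C_I` and `C_I ⬝ᵥ y` are the maximal minors on the columns `I` of `D`
topped by the row `v`, resp. `y`, so Cauchy–Binet gives `λ ⬝ᵥ y = det ([v; D] * [y; D]ᵀ)`, and when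
`D y = 0` this block determinant is `(v ⬝ᵥ y) * det (D Dᵀ)`. Cycles of `∂` satisfy `D z = 0` because
`Z` is independent, and `det (D Dᵀ) ≠ 0` because `D` has rank `n`; hence
`λ ⬝ᵥ z = w z * det (D Dᵀ)` on `Z₂`. Each column of `∂₊` is a cycle in the rational span of the
columns indexed by `J`, where `w` vanishes (a repeated column), so `∂₊ᵀ λ = 0`. Finally the rank
hypotheses make these `r` columns independent in the rank `r + 1` lattice `Z₂`, so `w` is not
identically zero there, and neither is `λ`.
-/

namespace HarmonicCycle

open Finset Module

section Minors

open Equiv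

variable {R : Type*} [CommRing R] {m c : ℕ}

noncomputable def colMinor (M : Matrix (Fin m) (Fin c) R) (I : Finset (Fin c)) : R :=
  if h : I.card = m then (M.submatrix id (I.orderEmbOfFin h)).det else 0

theorem intCast_colsDet (M : Matrix (Fin m) (Fin c) ℤ) (I : Finset (Fin c)) :
    (colsDet M I : R) = colMinor (M.map (Int.cast : ℤ → R)) I := by
  unfold colsDet colMinor
  split_ifs with h
  · rw [Matrix.submatrix_map]
    exact (Int.castRingHom R).map_det _
  · simp

theorem det_mul_transpose_eq_sum (A B : Matrix (Fin m) (Fin c) R) :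
    det (A * Bᵀ) = ∑ p : Fin m → Fin c, det (A.submatrix id p) * ∏ i, B i (p i) := calc
  det (A * Bᵀ) = ∑ p : Fin m → Fin c, ∑ σ : Perm (Fin m),
      Perm.sign σ * ∏ i, A (σ i) (p i) * B i (p i) := by
    simp only [det_apply', mul_apply, transpose_apply, prod_univ_sum, mul_sum,
      Fintype.piFinset_univ]
    rw [sum_comm]
  _ = _ := by
    refine sum_congr rfl fun p _ => ?_
    rw [det_apply', sum_mul]
    refine sum_congr rfl fun σ _ => ?_
    rw [prod_mul_distrib]
    simp only [submatrix_apply, id_eq]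
    ring

theorem det_submatrix_eq_zero_of_not_injective (A : Matrix (Fin m) (Fin c) R)
    {p : Fin m → Fin c} (hp : ¬ Function.Injective p) : det (A.submatrix id p) = 0 := by
  obtain ⟨i, j, hpij, hij⟩ := Function.not_injective_iff.mp hp
  exact det_zero_of_column_eq hij fun k => by simp [hpij]

theorem image_orderEmbOfFin_comp_perm {I : Finset (Fin c)} (h : I.card = m) (σ : Perm (Fin m)) :
    univ.image (I.orderEmbOfFin h ∘ σ) = I := by
  rw [image_comp, image_univ_equiv, image_orderEmbOfFin_univ]

theorem sum_injective_eq_sum_card_eq_sum_perm {M : Type*} [AddCommMonoid M]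
    (g : (Fin m → Fin c) → M) :
    ∑ p with Function.Injective p, g p =
      ∑ I : {I : Finset (Fin c) // I.card = m}, ∑ σ : Perm (Fin m),
        g (I.1.orderEmbOfFin I.2 ∘ σ) := by
  rw [← Fintype.sum_prod_type']
  symm
  refine sum_bij (fun x _ => x.1.1.orderEmbOfFin x.1.2 ∘ x.2) (fun x _ => ?_) ?_ ?_
    fun _ _ => rfl
  · simpa using (x.1.1.orderEmbOfFin x.1.2).injective.comp x.2.injective
  · rintro ⟨⟨I, hI⟩, σ⟩ - ⟨⟨I', hI'⟩, τ⟩ - hστ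
    obtain rfl : I = I' := by
      rw [← image_orderEmbOfFin_comp_perm hI σ, ← image_orderEmbOfFin_comp_perm hI' τ]
      exact congrArg (univ.image ·) hστ
    simpa [Equiv.ext_iff, funext_iff] using hστ
  · intro p hp
    have hinj : Function.Injective p := by simpa using hp
    have hcard : (univ.image p).card = m := by simp [card_image_of_injective _ hinj]
    let e := (univ.image p).orderIsoOfFin hcard
    have hmem t : p t ∈ univ.image p := mem_image_of_mem p (mem_univ t)
    have hbij : Function.Bijective fun t => e.symm ⟨p t, hmem t⟩ :=
      Finite.injective_iff_bijective.mp fun s t hst => hinj (by simpa using congrArg e hst)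
    refine ⟨⟨⟨_, hcard⟩, ofBijective _ hbij⟩, mem_univ _, funext fun t => ?_⟩
    simp [e, ← coe_orderIsoOfFin_apply]

theorem sum_perm_det_submatrix_mul_prod (A B : Matrix (Fin m) (Fin c) R) {I : Finset (Fin c)}
    (h : I.card = m) :
    ∑ σ : Perm (Fin m), det (A.submatrix id (I.orderEmbOfFin h ∘ σ)) *
      ∏ i, B i (I.orderEmbOfFin h (σ i)) = colMinor A I * colMinor B I := by
  rw [colMinor, colMinor, dif_pos h, dif_pos h, ← det_transpose (B.submatrix _ _),
    det_apply' (B.submatrix _ _)ᵀ, mul_sum]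
  refine sum_congr rfl fun σ _ => ?_
  rw [show A.submatrix id (I.orderEmbOfFin h ∘ σ) = (A.submatrix id (I.orderEmbOfFin h)).submatrix
    id σ from rfl, det_permute']
  simp only [transpose_apply, submatrix_apply, id_eq]
  ring

theorem det_mul_transpose_eq_sum_colMinor (A B : Matrix (Fin m) (Fin c) R) :
    det (A * Bᵀ) = ∑ I ∈ powersetCard m univ, colMinor A I * colMinor B I := by
  rw [det_mul_transpose_eq_sum, ← sum_filter_of_ne fun p _ hp => by_contra fun hinj =>
    hp (by rw [det_submatrix_eq_zero_of_not_injective A hinj, zero_mul]),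
    sum_injective_eq_sum_card_eq_sum_perm,
    sum_subtype (powersetCard m univ) (p := fun I => I.card = m) (by simp)]
  exact Fintype.sum_congr _ _ fun I => sum_perm_det_submatrix_mul_prod A B I.2

theorem orderEmbOfFin_erase {n : ℕ} {I : Finset (Fin c)} (h : I.card = n + 1) (j : Fin (n + 1))
    (h' : (I.erase (I.orderEmbOfFin h j)).card = n) :
    (I.erase (I.orderEmbOfFin h j)).orderEmbOfFin h' = I.orderEmbOfFin h ∘ j.succAbove := by
  refine (orderEmbOfFin_unique h' (fun s => mem_erase.mpr ⟨?_, orderEmbOfFin_mem _ _ _⟩)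
    ((I.orderEmbOfFin h).strictMono.comp (Fin.strictMono_succAbove j))).symm
  exact fun hs => Fin.succAbove_ne j s ((I.orderEmbOfFin h).injective hs)

theorem cyc_orderEmbOfFin {n : ℕ} (D : Matrix (Fin n) (Fin c) ℤ) {I : Finset (Fin c)}
    (h : I.card = n + 1) (j : Fin (n + 1)) :
    cyc D I (I.orderEmbOfFin h j) = (-1) ^ (j : ℕ) * colsDet D (I.erase (I.orderEmbOfFin h j)) := by
  have hj : (I.orderIsoOfFin h).symm ⟨I.orderEmbOfFin h j, orderEmbOfFin_mem _ _ _⟩ = j :=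
    (I.orderIsoOfFin h).symm_apply_apply j
  rw [cyc, dif_pos ⟨h, orderEmbOfFin_mem _ _ _⟩, hj]

theorem dotProduct_intCast_cyc {n : ℕ} (D : Matrix (Fin n) (Fin c) ℤ) {I : Finset (Fin c)}
    (h : I.card = n + 1) (u : Fin c → R) :
    u ⬝ᵥ (Int.cast ∘ cyc D I) = colMinor (of (Fin.cons u (D.map (Int.cast : ℤ → R)))) I := by
  have hzero : ∀ e ∉ I, u e * (Int.cast ∘ cyc D I) e = 0 := fun e he => by
    simp [cyc, he]
  rw [colMinor, dif_pos h, det_succ_row_zero, dotProduct,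
    ← sum_subset (subset_univ I) fun e _ he => hzero e he]
  have hI := sum_map univ (I.orderEmbOfFin h).toEmbedding fun e => u e * (Int.cast ∘ cyc D I) e
  rw [map_orderEmbOfFin_univ] at hI
  rw [hI]
  refine sum_congr rfl fun j _ => ?_
  have h' : (I.erase (I.orderEmbOfFin h j)).card = n := by simp [h]
  simp only [RelEmbedding.coe_toEmbedding, Function.comp_apply, cyc_orderEmbOfFin D h j]
  push_cast
  rw [intCast_colsDet, colMinor, dif_pos h', orderEmbOfFin_erase h j h', mul_left_comm, mul_assoc]
  rfl

theorem det_cons_mul_transpose_cons {n : ℕ} {ι : Type*} [Fintype ι] (M : Matrix (Fin n) ι R)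
    (v y : ι → R) (hy : M *ᵥ y = 0) :
    det (of (Fin.cons v M) * (of (Fin.cons y M))ᵀ) = (v ⬝ᵥ y) * det (M * Mᵀ) := by
  have hcol : ∀ l : Fin n, (of (Fin.cons v M) * (of (Fin.cons y M))ᵀ) l.succ 0 = 0 := fun l =>
    congrFun hy l
  rw [det_succ_column_zero, Fin.sum_univ_succ]
  simp only [hcol, mul_zero, zero_mul, sum_const_zero, add_zero, Fin.val_zero, pow_zero, one_mul]
  rfl

theorem dotProduct_sum_smul_cyc {n c : ℕ} (D : Matrix (Fin n) (Fin c) ℤ)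
    {w : Finset (Fin c) → ℤ} {v : Fin c → R} (hw : ∀ I, (w I : R) = v ⬝ᵥ (Int.cast ∘ cyc D I))
    {y : Fin c → R} (hy : D.map (Int.cast : ℤ → R) *ᵥ y = 0) :
    (Int.cast ∘ ∑ I ∈ powersetCard (n + 1) univ, w I • cyc D I) ⬝ᵥ y =
      (v ⬝ᵥ y) * det (D.map (Int.cast : ℤ → R) * (D.map (Int.cast : ℤ → R))ᵀ) := by
  have hcast : (Int.cast ∘ ∑ I ∈ powersetCard (n + 1) univ, w I • cyc D I : Fin c → R) =
      ∑ I ∈ powersetCard (n + 1) univ, (w I : R) • (Int.cast ∘ cyc D I) := by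
    ext e; simp
  rw [hcast, sum_dotProduct, ← det_cons_mul_transpose_cons (D.map (Int.cast : ℤ → R)) v y hy,
    det_mul_transpose_eq_sum_colMinor]
  refine sum_congr rfl fun I hI => ?_
  have hcard := (mem_powersetCard.mp hI).2
  rw [smul_dotProduct, hw, smul_eq_mul, dotProduct_comm _ y, dotProduct_intCast_cyc D hcard,
    dotProduct_intCast_cyc D hcard]

end Minors

section IntegerLattices

variable {ι κ : Type*}

theorem linearIndependent_intCast_iff {u : κ → ι → ℤ} :
    LinearIndependent ℚ (fun j => (Int.cast ∘ u j : ι → ℚ)) ↔ LinearIndependent ℤ u := by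
  let castLin := (Int.castAddHom ℚ).toIntLinearMap.compLeft ι
  have hker : LinearMap.ker castLin = ⊥ :=
    LinearMap.ker_eq_bot.mpr fun x y hxy => funext fun i => by
      simpa [castLin] using congrFun hxy i
  rw [← LinearIndependent.iff_fractionRing ℤ ℚ, ← castLin.linearIndependent_iff hker]
  rfl

theorem intCast_eq_sum_repr [Fintype κ] {N : Submodule ℤ (ι → ℤ)} (bN : Basis κ ℤ N) (z : N) :
    (Int.cast ∘ (z : ι → ℤ) : ι → ℚ) =
      ∑ j, (bN.repr z j : ℚ) • (Int.cast ∘ (bN j : ι → ℤ)) := by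
  ext i
  conv_lhs => rw [← bN.sum_repr z]
  simp only [Submodule.coe_sum, Submodule.coe_smul, Finset.sum_apply, Pi.smul_apply, smul_eq_mul,
    Function.comp_apply, Int.cast_sum, Int.cast_mul]

theorem exists_dotProduct_eq [Fintype ι] [Fintype κ] {K : Type*} [Field K] {k : κ → ι → K}
    (hk : LinearIndependent K k) (w : κ → K) : ∃ v : ι → K, ∀ j, v ⬝ᵥ k j = w j := by
  classical
  have hsurj : LinearMap.range (of k).mulVecLin = ⊤ :=
    Submodule.eq_top_of_finrank_eq (by
      rw [← Matrix.rank, LinearIndependent.rank_matrix (M := of k) hk, finrank_fintype_fun_eq_card])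
  obtain ⟨v, hv⟩ := LinearMap.range_eq_top.mp hsurj w
  exact ⟨v, fun j => by rw [dotProduct_comm, ← hv]; rfl⟩

theorem exists_dotProduct_eq_linearMap [Fintype ι] [Fintype κ] {N : Submodule ℤ (ι → ℤ)}
    (bN : Basis κ ℤ N) (f : N →ₗ[ℤ] ℤ) :
    ∃ v : ι → ℚ, ∀ z : N, v ⬝ᵥ (Int.cast ∘ (z : ι → ℤ)) = f z := by
  have hli : LinearIndependent ℚ fun j => (Int.cast ∘ (bN j : ι → ℤ) : ι → ℚ) :=
    linearIndependent_intCast_iff.mpr (bN.linearIndependent.map' N.subtype N.ker_subtype)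
  obtain ⟨v, hv⟩ := exists_dotProduct_eq hli fun j => (f (bN j) : ℚ)
  refine ⟨v, fun z => ?_⟩
  conv_rhs => rw [← bN.sum_repr z]
  rw [intCast_eq_sum_repr bN, dotProduct_sum, map_sum, Int.cast_sum]
  simp only [dotProduct_smul, hv, map_zsmul, smul_eq_mul, Int.cast_mul]

theorem exists_intCast_eq_smul (y : ι → ℚ) [Finite ι] :
    ∃ b : ℤ, b ≠ 0 ∧ ∃ z : ι → ℤ, Int.cast ∘ z = (b : ℚ) • y := by
  have := Fintype.ofFinite ι
  obtain ⟨⟨b, hb⟩, hby⟩ := IsLocalization.exist_integer_multiples (nonZeroDivisors ℤ) univ y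
  choose z hz using fun i => hby i (mem_univ i)
  exact ⟨b, nonZeroDivisors.ne_zero hb, z, funext fun i => by simpa using hz i⟩

theorem map_intCast_mulVec {m : Type*} [Fintype ι] (B : Matrix m ι ℤ) (z : ι → ℤ) :
    B.map (Int.cast : ℤ → ℚ) *ᵥ (Int.cast ∘ z) = Int.cast ∘ (B *ᵥ z) :=
  funext fun i => ((Int.castRingHom ℚ).map_mulVec B z i).symm

theorem finrank_ker_map_intCast [Fintype ι] [Fintype κ] {m : Type*} (B : Matrix m ι ℤ)
    (bZ : Basis κ ℤ (LinearMap.ker B.mulVecLin)) :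
    finrank ℚ (LinearMap.ker (B.map (Int.cast : ℤ → ℚ)).mulVecLin) = Fintype.card κ := by
  have hli : LinearIndependent ℚ fun j => (Int.cast ∘ (bZ j : ι → ℤ) : ι → ℚ) := by
    have := bZ.linearIndependent.map' _ (LinearMap.ker B.mulVecLin).ker_subtype
    exact linearIndependent_intCast_iff.mpr this
  suffices LinearMap.ker (B.map (Int.cast : ℤ → ℚ)).mulVecLin =
      Submodule.span ℚ (Set.range fun j => (Int.cast ∘ (bZ j : ι → ℤ) : ι → ℚ)) by
    rw [this, finrank_span_eq_card hli]
  refine le_antisymm (fun y hy => ?_) (Submodule.span_le.mpr ?_)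
  · obtain ⟨b, hb, z, hz⟩ := exists_intCast_eq_smul y
    have hBz : B *ᵥ z = 0 := by
      have := map_intCast_mulVec B z
      rw [hz, mulVec_smul, show B.map (Int.cast : ℤ → ℚ) *ᵥ y = 0 from hy, smul_zero] at this
      exact funext fun i => by simpa using (congrFun this i).symm
    have hy' : y = (b : ℚ)⁻¹ • (Int.cast ∘ z) := by
      rw [hz, smul_smul, inv_mul_cancel₀ (by exact_mod_cast hb), one_smul]
    rw [hy', intCast_eq_sum_repr bZ ⟨z, hBz⟩]
    exact Submodule.smul_mem _ _ (Submodule.sum_mem _ fun j _ =>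
      Submodule.smul_mem _ _ (Submodule.subset_span ⟨j, rfl⟩))
  · rintro _ ⟨j, rfl⟩
    rw [SetLike.mem_coe, LinearMap.mem_ker, Matrix.mulVecLin_apply, map_intCast_mulVec,
      show B *ᵥ (bZ j : ι → ℤ) = 0 from (bZ j).2]
    simp

end IntegerLattices

section Fields

variable {K : Type*} [Field K]

theorem det_mul_transpose_ne_zero [LinearOrder K] [IsStrictOrderedRing K] {n : ℕ} {ι : Type*}
    [Fintype ι] {M : Matrix (Fin n) ι K} (hM : M.rank = n) : det (M * Mᵀ) ≠ 0 := by
  have hrows : LinearIndependent K (M * Mᵀ).row := by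
    rw [linearIndependent_iff_card_eq_finrank_span, Set.finrank, ← rank_eq_finrank_span_row,
      rank_self_mul_transpose, hM, Fintype.card_fin]
  exact ((isUnit_iff_isUnit_det _).mp (linearIndependent_rows_iff_isUnit.mp hrows)).ne_zero

theorem linearIndependent_comp_col_of_span_eq {m d r : ℕ} {M : Matrix (Fin m) (Fin d) K}
    (hM : M.rank = r) {J : Fin r → Fin d}
    (hJ : Submodule.span K (Set.range (M.col ∘ J)) = Submodule.span K (Set.range M.col)) :
    LinearIndependent K (M.col ∘ J) := by
  rw [linearIndependent_iff_card_eq_finrank_span, Set.finrank, hJ, ← rank_eq_finrank_span_cols,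
    hM, Fintype.card_fin]

theorem dotProduct_eq_zero_of_mem_span {ι κ : Type*} [Fintype ι] {v : ι → K}
    {k : κ → ι → K} (hk : ∀ t, v ⬝ᵥ k t = 0) {y : ι → K}
    (hy : y ∈ Submodule.span K (Set.range k)) : v ⬝ᵥ y = 0 := by
  induction hy using Submodule.span_induction with
  | mem x hx => obtain ⟨t, rfl⟩ := hx; exact hk t
  | zero => exact dotProduct_zero v
  | add x y _ _ hx hy => rw [dotProduct_add, hx, hy, add_zero]
  | smul a x _ hx => rw [dotProduct_smul, hx, smul_zero]

end Fields

section WindingNumber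

variable {b c r : ℕ} {B : Matrix (Fin b) (Fin c) ℤ}
  (Z' : Basis (Fin (r + 1)) ℤ (LinearMap.ker B.mulVecLin))
  (cols : Fin r → LinearMap.ker B.mulVecLin)

theorem detCoord_eq_det (z : LinearMap.ker B.mulVecLin) :
    detCoord Z' cols z = det (of (Fin.cons (Z'.equivFun z) fun t => Z'.equivFun (cols t))) := by
  rw [detCoord, ← det_transpose]
  congr 1
  ext i j
  refine Fin.cases ?_ (fun t => ?_) i <;> simp

theorem detCoord_cols_eq_zero (t : Fin r) : detCoord Z' cols (cols t) = 0 := by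
  rw [detCoord_eq_det]
  exact det_zero_of_row_eq (Fin.succ_ne_zero t).symm rfl

theorem exists_detCoord_ne_zero (hcols : LinearIndependent ℤ cols) :
    ∃ z, detCoord Z' cols z ≠ 0 := by
  obtain ⟨x, hx⟩ := exists_linearIndependent_cons_of_lt_finrank
    (hcols.map' Z'.equivFun.toLinearMap Z'.equivFun.ker) (by simp)
  refine ⟨Z'.equivFun.symm x, ?_⟩
  rw [detCoord_eq_det, LinearEquiv.apply_symm_apply]
  exact nonsingular_iff_det_ne_zero.mp (linearIndependent_row_iff.mp hx)

theorem exists_dotProduct_eq_detCoord :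
    ∃ v : Fin c → ℚ, ∀ z : LinearMap.ker B.mulVecLin,
      v ⬝ᵥ (Int.cast ∘ (z : Fin c → ℤ)) = detCoord Z' cols z := by
  obtain ⟨v, hv⟩ := exists_dotProduct_eq_linearMap Z'
    ((detRowAlternating.toMultilinearMap.toLinearMap
      (Fin.cons 0 fun t => Z'.equivFun (cols t)) 0) ∘ₗ Z'.equivFun.toLinearMap)
  refine ⟨v, fun z => ?_⟩
  rw [hv, detCoord_eq_det]
  simp only [LinearMap.coe_comp, LinearEquiv.coe_coe, Function.comp_apply,
    MultilinearMap.toLinearMap_apply, Fin.update_cons_zero, AlternatingMap.coe_multilinearMap]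
  rfl

end WindingNumber

section Coordinates

variable {b c n : ℕ} {N : Submodule ℤ (Fin b → ℤ)} (Z : Basis (Fin n) ℤ N)
  {B : Matrix (Fin b) (Fin c) ℤ} {D : Matrix (Fin n) (Fin c) ℤ}

theorem eq_mul_of_coords (hD : ∀ j i, B i j = ∑ l, D l j * (Z l : Fin b → ℤ) i) :
    B = (of fun i l => (Z l : Fin b → ℤ) i) * D := by
  ext i j
  simp [mul_apply, hD, mul_comm]

theorem mulVec_eq_zero_of_coords (hD : ∀ j i, B i j = ∑ l, D l j * (Z l : Fin b → ℤ) i)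
    {z : Fin c → ℤ} (hz : B *ᵥ z = 0) : D *ᵥ z = 0 := by
  have hZ := Z.linearIndependent.map' _ N.ker_subtype
  refine (mulVec_injective_iff (M := of fun i l => (Z l : Fin b → ℤ) i)).mpr hZ ?_
  rw [mulVec_mulVec, ← eq_mul_of_coords Z hD, hz, mulVec_zero]

theorem rank_map_intCast_le_of_coords (hD : ∀ j i, B i j = ∑ l, D l j * (Z l : Fin b → ℤ) i) :
    (B.map (Int.cast : ℤ → ℚ)).rank ≤ (D.map (Int.cast : ℤ → ℚ)).rank := by
  have := rank_mul_le_right ((of fun i l => (Z l : Fin b → ℤ) i).map (Int.castRingHom ℚ))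
    (D.map (Int.castRingHom ℚ))
  rwa [← Matrix.map_mul, ← eq_mul_of_coords Z hD] at this

end Coordinates

theorem linearIndependent_of_span_eq_span_cols {c d r : ℕ} {N : Submodule ℤ (Fin c → ℤ)}
    {Bp : Matrix (Fin c) (Fin d) ℤ} (hrk : (Bp.map (Int.cast : ℤ → ℚ)).rank = r)
    {J : Fin r → Fin d}
    (hJspan : Submodule.span ℚ (Set.range fun t => fun i => (Bp i (J t) : ℚ))
      = Submodule.span ℚ (Set.range fun j => fun i => (Bp i j : ℚ)))
    {cols : Fin r → N} (hcols : ∀ t, (cols t : Fin c → ℤ) = fun i => Bp i (J t)) :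
    LinearIndependent ℤ cols := by
  have hcast : (fun t => (Int.cast ∘ N.subtype (cols t) : Fin c → ℚ)) =
      (Bp.map (Int.cast : ℤ → ℚ)).col ∘ J := by
    ext t i
    simp [hcols]
  refine LinearIndependent.of_comp N.subtype (linearIndependent_intCast_iff.mp ?_)
  exact hcast ▸ linearIndependent_comp_col_of_span_eq hrk hJspan

theorem dotProduct_col_eq_zero_of_span_eq {c d r : ℕ} {N : Submodule ℤ (Fin c → ℤ)}
    {Bp : Matrix (Fin c) (Fin d) ℤ} {J : Fin r → Fin d}
    (hJspan : Submodule.span ℚ (Set.range fun t => fun i => (Bp i (J t) : ℚ))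
      = Submodule.span ℚ (Set.range fun j => fun i => (Bp i j : ℚ)))
    {cols : Fin r → N} (hcols : ∀ t, (cols t : Fin c → ℤ) = fun i => Bp i (J t))
    {v : Fin c → ℚ} (hv : ∀ t, v ⬝ᵥ (Int.cast ∘ (cols t : Fin c → ℤ)) = 0) (j : Fin d) :
    v ⬝ᵥ (Int.cast ∘ fun i => Bp i j) = 0 := by
  have hmem : (Int.cast ∘ fun i => Bp i j : Fin c → ℚ) ∈
      Submodule.span ℚ (Set.range fun t => fun i => (Bp i (J t) : ℚ)) :=
    hJspan ▸ Submodule.subset_span ⟨j, rfl⟩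
  refine dotProduct_eq_zero_of_mem_span (fun t => ?_) hmem
  rw [← hv t, hcols]
  rfl

end HarmonicCycle

open HarmonicCycle

theorem standard_harmonic_cycle_nonzero_harmonic_general
    -- chain complex of free abelian groups around degree i
    (a b c d : ℕ)
    (Bm : Matrix (Fin a) (Fin b) ℤ) (B : Matrix (Fin b) (Fin c) ℤ)
    (Bp : Matrix (Fin c) (Fin d) ℤ)
    (h2 : B * Bp = 0)
    -- `Z` is a ℤ-basis of `Z₁ = ker ∂₋`, of rank n, and `D = [∂]_Z` is the matrix of
    -- coordinates of the columns of `∂` in the basis `Z`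
    (n : ℕ) (Z : Module.Basis (Fin n) ℤ (LinearMap.ker Bm.mulVecLin))
    (D : Matrix (Fin n) (Fin c) ℤ)
    (hD : ∀ j i, B i j = ∑ l, D l j * (Z l : Fin b → ℤ) i)
    -- `rk H̃_{i−1}(X) = 0` and `rk H̃_i(X) = 1`
    (hrkB : (B.map (Int.cast : ℤ → ℚ)).rank = n)
    (hker : Module.finrank ℚ (LinearMap.ker (B.map (Int.cast : ℤ → ℚ)).mulVecLin)
      = (Bp.map (Int.cast : ℤ → ℚ)).rank + 1)
    -- `Z'` is a ℤ-basis of `Z₂ = ker ∂`, of rank r + 1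
    (r : ℕ) (Z' : Module.Basis (Fin (r + 1)) ℤ (LinearMap.ker B.mulVecLin))
    -- `J` picks r columns of `∂₊` whose ℚ-span is the full column space of `∂₊`;
    -- `Jcol` are these columns as elements of `Z₂`
    (J : Fin r → Fin d)
    (Jcol : Fin r → LinearMap.ker B.mulVecLin)
    (hJcol : ∀ t, (Jcol t : Fin c → ℤ) = fun i => Bp i (J t))
    (hJspan : Submodule.span ℚ (Set.range fun t => fun i => (Bp i (J t) : ℚ))
      = Submodule.span ℚ (Set.range fun j => fun i => (Bp i j : ℚ)))
    -- the cycles `C_I` as elements of `Z₂`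
    (CI : Finset (Fin c) → LinearMap.ker B.mulVecLin)
    (hCI : ∀ I, (CI I : Fin c → ℤ) = cyc D I)
     :
    (∑ I ∈ Finset.powersetCard (n + 1) (Finset.univ : Finset (Fin c)),
        detCoord Z' Jcol (CI I) • cyc D I) ≠ 0 ∧
    B.mulVec (∑ I ∈ Finset.powersetCard (n + 1) (Finset.univ : Finset (Fin c)),
        detCoord Z' Jcol (CI I) • cyc D I) = 0 ∧
    Bpᵀ.mulVec (∑ I ∈ Finset.powersetCard (n + 1) (Finset.univ : Finset (Fin c)),
        detCoord Z' Jcol (CI I) • cyc D I) = 0 := by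
  set lam := ∑ I ∈ Finset.powersetCard (n + 1) (Finset.univ : Finset (Fin c)),
    detCoord Z' Jcol (CI I) • cyc D I
  set Dq := D.map (Int.cast : ℤ → ℚ)
  have hG : det (Dq * Dqᵀ) ≠ 0 := det_mul_transpose_ne_zero
    (le_antisymm (rank_le_height Dq) (hrkB ▸ rank_map_intCast_le_of_coords Z hD))
  obtain ⟨v, hv⟩ := exists_dotProduct_eq_detCoord Z' Jcol
  have hdot (z : LinearMap.ker B.mulVecLin) :
      (Int.cast ∘ lam) ⬝ᵥ (Int.cast ∘ (z : Fin c → ℤ)) = detCoord Z' Jcol z * det (Dq * Dqᵀ) := by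
    have hz : Dq *ᵥ (Int.cast ∘ (z : Fin c → ℤ)) = 0 := by
      rw [map_intCast_mulVec, mulVec_eq_zero_of_coords Z hD z.2]
      simp
    rw [dotProduct_sum_smul_cyc D (fun I => by rw [← hv, hCI]) hz, hv]
  refine ⟨fun h0 => ?_, ?_, ?_⟩
  · have hrk : (Bp.map (Int.cast : ℤ → ℚ)).rank = r := by
      have := finrank_ker_map_intCast B Z'
      rw [Fintype.card_fin] at this
      omega
    obtain ⟨z, hz⟩ :=
      exists_detCoord_ne_zero Z' Jcol (linearIndependent_of_span_eq_span_cols hrk hJspan hJcol)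
    exact hz (by simpa [h0, hG] using hdot z)
  · simp only [lam, mulVec_sum, mulVec_smul, ← hCI]
    exact Finset.sum_eq_zero fun I _ => by
      rw [show B *ᵥ (CI I : Fin c → ℤ) = 0 from (CI I).2, smul_zero]
  · ext j
    have hcol : B *ᵥ (fun i => Bp i j) = 0 := funext fun i => congrFun (congrFun h2 i) j
    have hvJ t : v ⬝ᵥ (Int.cast ∘ (Jcol t : Fin c → ℤ)) = 0 := by
      rw [hv, detCoord_cols_eq_zero, Int.cast_zero]
    have hlam := hdot ⟨_, hcol⟩
    rw [← hv, dotProduct_col_eq_zero_of_span_eq hJspan hJcol hvJ j, zero_mul] at hlam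
    have hcast : ((Bpᵀ *ᵥ lam) j : ℚ) = 0 := by
      rw [← hlam]
      simp [mulVec, dotProduct, mul_comm]
    exact_mod_cast hcast

/-- The standard harmonic cycle `λ = Σ_I w(C_I) • C_I` is a nonzero harmonic cycle:
`λ ≠ 0`, `∂ · λ = 0` and `∂₊ᵀ · λ = 0`, i.e. `λ` lies in `ker ∂ ∩ ker ∂₊ᵀ`. -/
theorem standard_harmonic_cycle_nonzero_harmonic
    -- chain complex of free abelian groups around degree i
    (a b c d : ℕ) (ha : 0 < a) (hb : 0 < b) (hc : 0 < c) (hd : 0 < d)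
    (Bm : Matrix (Fin a) (Fin b) ℤ) (B : Matrix (Fin b) (Fin c) ℤ)
    (Bp : Matrix (Fin c) (Fin d) ℤ)
    (h1 : Bm * B = 0) (h2 : B * Bp = 0)
    -- `Z` is a ℤ-basis of `Z₁ = ker ∂₋`, of rank n, and `D = [∂]_Z` is the matrix of
    -- coordinates of the columns of `∂` in the basis `Z`
    (n : ℕ) (Z : Module.Basis (Fin n) ℤ (LinearMap.ker Bm.mulVecLin))
    (D : Matrix (Fin n) (Fin c) ℤ)
    (hD : ∀ j i, B i j = ∑ l, D l j * (Z l : Fin b → ℤ) i)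
    -- `rk H̃_{i−1}(X) = 0` and `rk H̃_i(X) = 1`
    (hrkB : (B.map (Int.cast : ℤ → ℚ)).rank = n)
    (hker : Module.finrank ℚ (LinearMap.ker (B.map (Int.cast : ℤ → ℚ)).mulVecLin)
      = (Bp.map (Int.cast : ℤ → ℚ)).rank + 1)
    -- `Z'` is a ℤ-basis of `Z₂ = ker ∂`, of rank r + 1
    (r : ℕ) (Z' : Module.Basis (Fin (r + 1)) ℤ (LinearMap.ker B.mulVecLin))
    -- `J` picks r columns of `∂₊` whose ℚ-span is the full column space of `∂₊`;
    -- `Jcol` are these columns as elements of `Z₂`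
    (J : Fin r → Fin d) (hJinj : Function.Injective J)
    (Jcol : Fin r → LinearMap.ker B.mulVecLin)
    (hJcol : ∀ t, (Jcol t : Fin c → ℤ) = fun i => Bp i (J t))
    (hJspan : Submodule.span ℚ (Set.range fun t => fun i => (Bp i (J t) : ℚ))
      = Submodule.span ℚ (Set.range fun j => fun i => (Bp i j : ℚ)))
    -- the cycles `C_I` as elements of `Z₂`
    (CI : Finset (Fin c) → LinearMap.ker B.mulVecLin)
    (hCI : ∀ I, (CI I : Fin c → ℤ) = cyc D I)
     :
    (∑ I ∈ Finset.powersetCard (n + 1) (Finset.univ : Finset (Fin c)),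
        detCoord Z' Jcol (CI I) • cyc D I) ≠ 0 ∧
    B.mulVec (∑ I ∈ Finset.powersetCard (n + 1) (Finset.univ : Finset (Fin c)),
        detCoord Z' Jcol (CI I) • cyc D I) = 0 ∧
    Bpᵀ.mulVec (∑ I ∈ Finset.powersetCard (n + 1) (Finset.univ : Finset (Fin c)),
        detCoord Z' Jcol (CI I) • cyc D I) = 0 :=
  standard_harmonic_cycle_nonzero_harmonic_general a b c d Bm B Bp h2 n Z D hD hrkB hker r Z' J Jcol
    hJcol hJspan CI hCI
end
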